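/- arXiv:1902.06576 — 2 statements merged into one kernel-verified Lean document; each statement's English description precedes it below -/
import Mathlib

section
/- Let V=(Q,D,Δ,w) be a 1-VASS with disequality tests and let s,t ∈ Q be states such that t is reachable from s in the underlying directed graph (Q,Δ). Let V' be the 1-VASS with disequality tests obtained from V by deleting all states from which t is not reachable in the underlying graph (together with their incident transitions), and adding a fresh state t' with D_{t'} = ℕ, a transition from t to t' of weight 0, and a self-loop on t' of weight +1. Then (s,0) covers t in V if and only if (s,0) is unbounded in V'. -/
namespace VASSPaper

/-- A 1-VASS with disequality tests: states `Q`, transition relation `delta`,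
integer weights `w`, and for each state a cofinite set `D q ⊆ ℕ` of allowed counter values. -/
structure OneVASS (Q : Type) where
  delta : Q → Q → Prop
  w : Q → Q → ℤ
  D : Q → Set ℕ
  cofinite : ∀ q, (D q)ᶜ.Finite

variable {Q : Type}

/-- A path is a nonempty sequence of states joined by transitions. -/
def IsPath (V : OneVASS Q) : List Q → Prop
  | [] => False
  | [_] => True
  | a :: b :: l => V.delta a b ∧ IsPath V (b :: l)

/-- The weight of a path: the sum of the weights of its transitions. -/
def pathWeight (V : OneVASS Q) (π : List Q) : ℤ :=
  (List.zipWith V.w π π.tail).sum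

/-- The counter value at position `i` of the run over `π` starting with counter `z`. -/
def counterAt (V : OneVASS Q) (z : ℕ) (π : List Q) (i : ℕ) : ℤ :=
  (z : ℤ) + pathWeight V (π.take (i + 1))

/-- `π` lifts to a run from counter value `z`: all counter values stay nonnegative. -/
def IsRun (V : OneVASS Q) (π : List Q) (z : ℕ) : Prop :=
  IsPath V π ∧ ∀ i, i < π.length → 0 ≤ counterAt V z π i

/-- A valid run additionally respects all disequality guards. -/
def IsValidRun (V : OneVASS Q) (π : List Q) (z : ℕ) : Prop :=
  IsRun V π z ∧ ∀ i, ∀ h : i < π.length, (counterAt V z π i).toNat ∈ V.D (π.get ⟨i, h⟩)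

/-- `π` goes from configuration `c` to configuration `c'`. -/
def RunFromTo (V : OneVASS Q) (π : List Q) (c c' : Q × ℕ) : Prop :=
  π.head? = some c.1 ∧ π.getLast? = some c'.1 ∧ (c'.2 : ℤ) = (c.2 : ℤ) + pathWeight V π

/-- `c'` is reachable from `c` by a valid run. -/
def Reaches (V : OneVASS Q) (c c' : Q × ℕ) : Prop :=
  ∃ π, IsValidRun V π c.2 ∧ RunFromTo V π c c'

/-- A configuration is unbounded if infinitely many configurations are reachable from it. -/
def Unbounded (V : OneVASS Q) (c : Q × ℕ) : Prop :=
  {c' | Reaches V c c'}.Infinite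

/-- `(s,0)` covers the state `t`. -/
def Covers (V : OneVASS Q) (s t : Q) : Prop :=
  ∃ z, Reaches V (s, 0) (t, z)

/-- Every state has at most one disequality guard. -/
def SingleGuard (V : OneVASS Q) : Prop :=
  ∀ q, V.D q = Set.univ ∨ ∃ g : ℕ, V.D q = {g}ᶜ

/-- The minimum weight of a (possibly empty) prefix of `π`. -/
def pmin (V : OneVASS Q) (π : List Q) : ℤ :=
  ((List.range (π.length + 1)).map fun i => pathWeight V (π.take i)).foldr min 0

/-- The maximum weight of a (possibly empty) suffix of `π`. -/
def smax (V : OneVASS Q) (π : List Q) : ℤ :=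
  ((List.range (π.length + 1)).map fun i => pathWeight V (π.drop i)).foldr max 0

/-- A cycle on `q`: a path with at least one transition starting and ending at `q`. -/
def IsCycleOn (V : OneVASS Q) (π : List Q) (q : Q) : Prop :=
  IsPath V π ∧ 2 ≤ π.length ∧ π.head? = some q ∧ π.getLast? = some q

/-- A simple cycle on `q`. -/
def IsSimpleCycleOn (V : OneVASS Q) (π : List Q) (q : Q) : Prop :=
  IsCycleOn V π q ∧ π.dropLast.Nodup

/-- The set of states lying on a positive-weight simple cycle. -/
def Qplus (V : OneVASS Q) : Set Q :=
  {q | ∃ π, IsSimpleCycleOn V π q ∧ 0 < pathWeight V π}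

/-- `γ` is a valid choice of cycles: for each `q ∈ Q₊`, `γ q` is a simple positive cycle
on `q` whose `pmin` is maximal among all positive-weight simple cycles on `q`. -/
def GammaChoice (V : OneVASS Q) (γ : Q → List Q) : Prop :=
  ∀ q ∈ Qplus V,
    IsSimpleCycleOn V (γ q) q ∧ 0 < pathWeight V (γ q) ∧
      ∀ π, IsSimpleCycleOn V π q → 0 < pathWeight V π → pmin V π ≤ pmin V (γ q)

/-- `Conf₊`: configurations `(q,z)` with `q ∈ Q₊` and `z + pmin (γ q) ≥ 0`. -/
def ConfPlus (V : OneVASS Q) (γ : Q → List Q) : Set (Q × ℕ) :=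
  {c | c.1 ∈ Qplus V ∧ 0 ≤ (c.2 : ℤ) + pmin V (γ c.1)}

/-- `W_q`, the weight of the chosen cycle `γ q`, as a natural number. -/
def Wnat (V : OneVASS Q) (γ : Q → List Q) (q : Q) : ℕ :=
  (pathWeight V (γ q)).toNat

/-- The `q`-residue class of `r` modulo `W_q`. -/
def resClass (V : OneVASS Q) (γ : Q → List Q) (q : Q) (r : ℕ) : Set (Q × ℕ) :=
  {c | c ∈ ConfPlus V γ ∧ c.1 = q ∧ c.2 % Wnat V γ q = r}

/-- `iterCycle π k` is the cycle `π` iterated `k+1` times. -/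
def iterCycle (π : List Q) : ℕ → List Q
  | 0 => π
  | k + 1 => iterCycle π k ++ π.tail

/-- Counter values `z < z'` at state `q` are connected by a valid run iterating `γ q`. -/
def chainLinked (V : OneVASS Q) (γ : Q → List Q) (q : Q) (z z' : ℕ) : Prop :=
  ∃ k, IsValidRun V (iterCycle (γ q) k) z ∧
    (z' : ℤ) = (z : ℤ) + pathWeight V (iterCycle (γ q) k)

/-- Any two configurations of `S` are connected by iterating `γ q`. -/
def ChainCond (V : OneVASS Q) (γ : Q → List Q) (q : Q) (S : Set (Q × ℕ)) : Prop :=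
  ∀ c ∈ S, ∀ c' ∈ S, c.2 < c'.2 → chainLinked V γ q c.2 c'.2

/-- A `q`-chain inside the `q`-residue class of `r`: a maximal subset whose
configurations are pairwise connected by iterating `γ q`. -/
def IsChainIn (V : OneVASS Q) (γ : Q → List Q) (q : Q) (r : ℕ) (C : Set (Q × ℕ)) : Prop :=
  C ⊆ resClass V γ q r ∧ ChainCond V γ q C ∧
    ∀ C', C ⊆ C' → C' ⊆ resClass V γ q r → ChainCond V γ q C' → C' = C

/-- A chain (in some residue class of some state of `Q₊`). -/
def IsChain (V : OneVASS Q) (γ : Q → List Q) (C : Set (Q × ℕ)) : Prop :=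
  ∃ q r, q ∈ Qplus V ∧ r < Wnat V γ q ∧ IsChainIn V γ q r C

/-- A set of configurations is bounded if its counter values are bounded. -/
def chainBounded (C : Set (Q × ℕ)) : Prop :=
  BddAbove (Prod.snd '' C)

/-- A residue class is trivial if it consists of a single unbounded chain. -/
def TrivialClass (V : OneVASS Q) (γ : Q → List Q) (q : Q) (r : ℕ) : Prop :=
  IsChainIn V γ q r (resClass V γ q r) ∧ ¬ chainBounded (resClass V γ q r)

/-- There is a valid run of length `k` (i.e. `k` transitions) from `c` into the set `S`. -/
def RunLenTo (V : OneVASS Q) (c : Q × ℕ) (S : Set (Q × ℕ)) (k : ℕ) : Prop :=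
  ∃ π c', c' ∈ S ∧ IsValidRun V π c.2 ∧ RunFromTo V π c c' ∧ π.length = k + 1

/-- Configurations of `Conf₊ \ Un` whose distance to `Un` is minimal among all
configurations of `Conf₊ \ Un`. -/
def Uprime (V : OneVASS Q) (γ : Q → List Q) (Un : Set (Q × ℕ)) : Set (Q × ℕ) :=
  {c | c ∈ ConfPlus V γ \ Un ∧
    ∃ k, RunLenTo V c Un k ∧
      ∀ c' ∈ ConfPlus V γ \ Un, ∀ j, RunLenTo V c' Un j → k ≤ j}

/-- `S` is downward closed in every chain. -/
def dcClosed (V : OneVASS Q) (γ : Q → List Q) (S : Set (Q × ℕ)) : Prop :=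
  ∀ C, IsChain V γ C → ∀ c ∈ S ∩ C, ∀ c' ∈ C, c'.2 ≤ c.2 → c' ∈ S

/-- The inductive sequence `U_n`: `U_0` is the union of the unbounded chains; `U_{n+1}` is the
smallest superset of `U_n ∪ U'_n` that is downward closed in every chain. -/
def U (V : OneVASS Q) (γ : Q → List Q) : ℕ → Set (Q × ℕ)
  | 0 => ⋃₀ {C | IsChain V γ C ∧ ¬ chainBounded C}
  | n + 1 => ⋂₀ {S | U V γ n ∪ Uprime V γ (U V γ n) ⊆ S ∧ dcClosed V γ S}

/-- `C` is an `n`-active bounded chain in the `q`-residue class of `r`. -/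
def nActiveIn (V : OneVASS Q) (γ : Q → List Q) (q : Q) (r : ℕ) (n : ℕ)
    (C : Set (Q × ℕ)) : Prop :=
  IsChainIn V γ q r C ∧ chainBounded C ∧
    ∃ c ∈ U V γ n ∩ resClass V γ q r, ∃ c' ∈ C, c.2 ≤ c'.2

/-- `δ_n(C)` for a `q`-chain `C`: configurations outside `U_n` whose counter value lies
between two counter values of `C \ U_n`. -/
def deltaC (V : OneVASS Q) (γ : Q → List Q) (n : ℕ) (q : Q) (C : Set (Q × ℕ)) :
    Set (Q × ℕ) :=
  {c | c ∈ ConfPlus V γ ∧ c.1 = q ∧ c ∉ U V γ n ∧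
    ∃ z₁ z₂, (q, z₁) ∈ C \ U V γ n ∧ (q, z₂) ∈ C \ U V γ n ∧ z₁ ≤ c.2 ∧ c.2 ≤ z₂}

/-- `δ_n(R)` for the `q`-residue class `R` of `r`: union of `δ_n(C)` over `n`-active chains. -/
def deltaR (V : OneVASS Q) (γ : Q → List Q) (n : ℕ) (q : Q) (r : ℕ) : Set (Q × ℕ) :=
  {c | ∃ C, nActiveIn V γ q r n C ∧ c ∈ deltaC V γ n q C}

/-- A positive-weight cycle (as a list of states). -/
def IsPosCycle (V : OneVASS Q) (π : List Q) : Prop :=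
  2 ≤ π.length ∧ π.head? = π.getLast? ∧ 0 < pathWeight V π

/-- A path is primitive if no proper infix of it is a positive-weight cycle. -/
def Primitive (V : OneVASS Q) (π : List Q) : Prop :=
  ∀ i l, (π.drop i).take l ≠ π → ¬ IsPosCycle V ((π.drop i).take l)


/-- The 1-VASS with disequality tests obtained from `V` by restricting to states from which
`t` is reachable in the underlying graph, and adding a fresh state `t'` (= `none`) with
`D_{t'} = ℕ`, a weight-0 transition from `t` to `t'`, and a weight-1 self-loop on `t'`. -/
def coverReduction (V : OneVASS Q) (t : Q) :
    OneVASS (Option {q : Q // Relation.ReflTransGen V.delta q t}) where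
  delta a b :=
    match a, b with
    | some p, some r => V.delta p.1 r.1
    | some p, none => p.1 = t
    | none, none => True
    | none, some _ => False
  w a b :=
    match a, b with
    | some p, some r => V.w p.1 r.1
    | some _, none => 0
    | none, none => 1
    | none, some _ => 0
  D a :=
    match a with
    | some p => V.D p.1
    | none => Set.univ
  cofinite := by
    intro a
    match a with
    | none => simp
    | some p => exact V.cofinite p.1

/-!
If `(s,0)` covers `t` in `V`, the same run followed by the transition to `t'` and the pumped
self-loop reaches infinitely many configurations `(t', z)` of `V'`. Conversely, `V'` has finitely
many states, so an infinite reachable set contains configurations of one state with arbitrarily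
large counters. Every state of `V'` reaches `t'` in the graph, and since guards are cofinite, a
graph path followed from a large enough counter is a valid run. So `V'` reaches `t'`, and the part
of that run before `t'` is a run of `V` ending in `t`.
-/

open Relation Filter

lemma _root_.Set.Infinite.exists_prodMk_preimage_infinite {A B : Type*} [Finite A]
    {S : Set (A × B)} (hS : S.Infinite) : ∃ a, (Prod.mk a ⁻¹' S).Infinite := by
  by_contra! h
  exact hS ((Set.finite_iUnion fun a => (h a).image (Prod.mk a)).subset
    fun p hp => Set.mem_iUnion.2 ⟨p.1, p.2, hp, rfl⟩)

/-- Only the guard of the target is tested, so that a valid run is a valid initial configuration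
followed by a chain of steps (`reaches_iff`). -/
def Step (V : OneVASS Q) (c c' : Q × ℕ) : Prop :=
  V.delta c.1 c'.1 ∧ (c'.2 : ℤ) = c.2 + V.w c.1 c'.1 ∧ c'.2 ∈ V.D c'.1

section Runs

variable {V : OneVASS Q}

lemma pathWeight_cons_cons (a b : Q) (l : List Q) :
    pathWeight V (a :: b :: l) = V.w a b + pathWeight V (b :: l) := by
  simp [pathWeight]

lemma counterAt_zero (z : ℕ) (π : List Q) : counterAt V z π 0 = z := by
  cases π <;> simp [counterAt, pathWeight]

lemma counterAt_cons_cons_succ {z z' : ℕ} {a b : Q} (hz : (z' : ℤ) = z + V.w a b)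
    (l : List Q) (i : ℕ) :
    counterAt V z (a :: b :: l) (i + 1) = counterAt V z' (b :: l) i := by
  simp only [counterAt, List.take_succ_cons, pathWeight_cons_cons, hz]
  ring

lemma isValidRun_singleton {a : Q} {z : ℕ} : IsValidRun V [a] z ↔ z ∈ V.D a := by
  simp [IsValidRun, IsRun, IsPath, counterAt_zero]

lemma isValidRun_cons_cons {a b : Q} {l : List Q} {z : ℕ} :
    IsValidRun V (a :: b :: l) z ↔
      z ∈ V.D a ∧ ∃ z' : ℕ, Step V (a, z) (b, z') ∧ IsValidRun V (b :: l) z' := by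
  constructor
  · rintro ⟨⟨⟨hδ, hpath⟩, hnn⟩, hD⟩
    have hnn₁ : 0 ≤ (z : ℤ) + V.w a b := by simpa [counterAt, pathWeight] using hnn 1 (by simp)
    obtain ⟨z', hz'⟩ := Int.eq_ofNat_of_zero_le hnn₁
    have hshift := counterAt_cons_cons_succ hz'.symm l
    refine ⟨by simpa [counterAt_zero] using hD 0 (by simp), z', ⟨hδ, hz'.symm, ?_⟩,
      ⟨hpath, fun i hi => ?_⟩, fun i hi => ?_⟩
    · simpa [hshift, counterAt_zero] using hD 1 (by simp)
    · rw [← hshift]; exact hnn (i + 1) (by simpa using hi)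
    · rw [← hshift]; exact hD (i + 1) (by simpa using hi)
  · rintro ⟨ha, z', ⟨hδ, hz', -⟩, ⟨hpath, hnn⟩, hD⟩
    refine ⟨⟨⟨hδ, hpath⟩, fun i hi => ?_⟩, fun i hi => ?_⟩ <;> cases i with
    | zero => simp [counterAt_zero, ha]
    | succ i =>
      rw [counterAt_cons_cons_succ hz']
      first | exact hnn i (by simpa using hi) | exact hD i (by simpa using hi)

lemma IsValidRun.head_mem {a : Q} {l : List Q} {z : ℕ} (h : IsValidRun V (a :: l) z) :
    z ∈ V.D a := by
  simpa [counterAt_zero] using h.2 0 (by simp)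

lemma reflTransGen_step_of_isValidRun :
    ∀ {π : List Q} {q q' : Q} {z z' : ℕ}, IsValidRun V π z → π.head? = some q →
      π.getLast? = some q' → (z' : ℤ) = z + pathWeight V π →
      ReflTransGen (Step V) (q, z) (q', z')
  | [], _, _, _, _, h, _, _, _ => h.1.1.elim
  | [a], q, q', z, z', _, hq, hq', hz => by
    obtain rfl : a = q := by simpa using hq
    obtain rfl : a = q' := by simpa using hq'
    obtain rfl : z' = z := by simpa [pathWeight] using hz
    exact .refl
  | a :: b :: l, q, q', z, z', h, hq, hq', hz => by
    obtain rfl : a = q := by simpa using hq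
    obtain ⟨-, z₁, hstep, hrun⟩ := isValidRun_cons_cons.1 h
    refine .head hstep (reflTransGen_step_of_isValidRun hrun rfl ?_ ?_)
    · rwa [List.getLast?_cons_cons] at hq'
    · rw [hz, pathWeight_cons_cons, hstep.2.1]
      ring

lemma Reaches.head {c d e : Q × ℕ} (hc : c.2 ∈ V.D c.1) (hstep : Step V c d)
    (h : Reaches V d e) : Reaches V c e := by
  obtain ⟨_ | ⟨b, π⟩, hrun, hhead, hlast, hw⟩ := h
  · exact hrun.1.1.elim
  obtain rfl : b = d.1 := by simpa using hhead
  refine ⟨c.1 :: d.1 :: π, isValidRun_cons_cons.2 ⟨hc, d.2, hstep, hrun⟩, rfl, ?_, ?_⟩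
  · rwa [List.getLast?_cons_cons]
  · rw [pathWeight_cons_cons, hw, hstep.2.1]
    ring

theorem reaches_iff {c c' : Q × ℕ} :
    Reaches V c c' ↔ c.2 ∈ V.D c.1 ∧ ReflTransGen (Step V) c c' := by
  constructor
  · rintro ⟨_ | ⟨a, π⟩, hrun, hhead, hlast, hw⟩
    · exact hrun.1.1.elim
    obtain rfl : a = c.1 := by simpa using hhead
    exact ⟨hrun.head_mem, reflTransGen_step_of_isValidRun hrun rfl hlast hw⟩
  · rintro ⟨hc, h⟩
    induction h using ReflTransGen.head_induction_on with
    | refl => exact ⟨[c'.1], isValidRun_singleton.2 hc, rfl, rfl, by simp [pathWeight]⟩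
    | head hstep _ ih => exact .head hc hstep (ih hstep.2.2)

end Runs

lemma eventually_mem_D (V : OneVASS Q) (q : Q) : ∀ᶠ z in atTop, z ∈ V.D q := by
  rw [← Nat.cofinite_eq_atTop]
  exact Filter.eventually_cofinite.2 (V.cofinite q)

lemma eventually_exists_reflTransGen_step (V : OneVASS Q) {q q' : Q}
    (h : ReflTransGen V.delta q q') :
    ∀ᶠ z in atTop, ∃ z', ReflTransGen (Step V) (q, z) (q', z') := by
  induction h using ReflTransGen.head_induction_on with
  | refl => exact .of_forall fun z => ⟨z, .refl⟩
  | @head q₀ q₁ hδ _ ih =>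
    have hshift : Tendsto (fun z : ℕ => ((z : ℤ) + V.w q₀ q₁).toNat) atTop atTop :=
      tendsto_atTop_atTop.2 fun b => ⟨b + (V.w q₀ q₁).natAbs, fun z hz => by omega⟩
    filter_upwards [hshift.eventually (ih.and (eventually_mem_D V q₁)),
      eventually_ge_atTop (V.w q₀ q₁).natAbs] with z ⟨⟨z', hz'⟩, hmem⟩ hz
    exact ⟨z', .head ⟨hδ, by dsimp only; omega, hmem⟩ hz'⟩

section coverReduction

variable {V : OneVASS Q} {t : Q}

lemma reflTransGen_step_coverReduction_some {c c' : Q × ℕ} (h : ReflTransGen (Step V) c c')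
    (hc : ReflTransGen V.delta c.1 t) (hc' : ReflTransGen V.delta c'.1 t) :
    ReflTransGen (Step (coverReduction V t)) (some ⟨c.1, hc⟩, c.2) (some ⟨c'.1, hc'⟩, c'.2) := by
  induction h using ReflTransGen.head_induction_on with
  | refl => exact .refl
  | @head c d hstep hrest ih =>
    have hd : ReflTransGen V.delta d.1 t := (hrest.lift Prod.fst fun _ _ h => h.1).trans hc'
    have hstep' : Step (coverReduction V t) (some ⟨c.1, hc⟩, c.2) (some ⟨d.1, hd⟩, d.2) := hstep
    exact .head hstep' (ih hd)

lemma step_coverReduction_none (z : ℕ) :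
    Step (coverReduction V t) (some ⟨t, .refl⟩, z) (none, z) :=
  ⟨rfl, (add_zero _).symm, trivial⟩

lemma reflTransGen_step_coverReduction_none (n k : ℕ) :
    ReflTransGen (Step (coverReduction V t)) (none, n) (none, n + k) := by
  induction k with
  | zero => exact .refl
  | succ k ih => exact ih.tail ⟨trivial, by push_cast; rfl, trivial⟩

lemma reflTransGen_step_coverReduction_none_of_reflTransGen_step {c : Q × ℕ} {z : ℕ}
    (h : ReflTransGen (Step V) c (t, z)) (hc : ReflTransGen V.delta c.1 t) :
    ReflTransGen (Step (coverReduction V t)) (some ⟨c.1, hc⟩, c.2) (none, z) :=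
  (reflTransGen_step_coverReduction_some h hc .refl).tail (step_coverReduction_none z)

lemma unbounded_coverReduction_of_reaches_none {c : Option {q // ReflTransGen V.delta q t} × ℕ}
    {y : ℕ} (h : Reaches (coverReduction V t) c (none, y)) : Unbounded (coverReduction V t) c := by
  obtain ⟨hc, h⟩ := reaches_iff.1 h
  refine Set.infinite_of_injective_forall_mem (f := fun k : ℕ => (none, y + k)) ?_
    fun k => reaches_iff.2 ⟨hc, h.trans (reflTransGen_step_coverReduction_none y k)⟩
  intro k l hkl
  simpa using hkl

lemma exists_reflTransGen_step_of_reflTransGen_coverReduction_none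
    {c : Option {q // ReflTransGen V.delta q t} × ℕ} {y : ℕ}
    (h : ReflTransGen (Step (coverReduction V t)) c (none, y)) :
    ∀ a, c.1 = some a → ∃ z, ReflTransGen (Step V) (a.1, c.2) (t, z) := by
  induction h using ReflTransGen.head_induction_on with
  | refl => simp
  | @head c d hstep _ ih =>
    obtain ⟨_ | a, x⟩ := c
    · simp
    rintro _ ⟨⟩
    obtain ⟨_ | b, m⟩ := d
    · have hat : a.1 = t := hstep.1
      exact ⟨x, by simp only [hat]; exact .refl⟩
    · have hstep' : Step V (a.1, x) (b.1, m) := hstep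
      obtain ⟨z, hz⟩ := ih b rfl
      exact ⟨z, .head hstep' hz⟩

lemma exists_reflTransGen_step_coverReduction_none_of_unbounded [Finite Q]
    {a : {q // ReflTransGen V.delta q t}} {x : ℕ} (h : Unbounded (coverReduction V t) (some a, x)) :
    ∃ y, ReflTransGen (Step (coverReduction V t)) (some a, x) (none, y) := by
  obtain ⟨_ | p, hp⟩ := h.exists_prodMk_preimage_infinite
  · obtain ⟨y, hy⟩ := hp.nonempty
    exact ⟨y, (reaches_iff.1 hy).2⟩
  · obtain ⟨z, hz, z', hz'⟩ := ((Nat.frequently_atTop_iff_infinite.2 hp).and_eventually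
      (eventually_exists_reflTransGen_step V p.2)).exists
    exact ⟨z', (reaches_iff.1 hz).2.trans
      (reflTransGen_step_coverReduction_none_of_reflTransGen_step hz' p.2)⟩

end coverReduction

/-- if `t` is reachable from `s` in the underlying graph, then `(s,0)` covers `t`
in `V` iff `(s,0)` is unbounded in the reduced 1-VASS `V'`. -/
theorem coverability_iff_unboundedness_of_reduction
    {Q : Type} [Fintype Q] (V : OneVASS Q) (s t : Q)
    (hst : Relation.ReflTransGen V.delta s t) :
    Covers V s t ↔ Unbounded (coverReduction V t) (some ⟨s, hst⟩, 0) := by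
  constructor
  · rintro ⟨z, hz⟩
    obtain ⟨hs, hrun⟩ := reaches_iff.1 hz
    exact unbounded_coverReduction_of_reaches_none (y := z) <|
      reaches_iff.2 ⟨hs, reflTransGen_step_coverReduction_none_of_reflTransGen_step hrun hst⟩
  · intro hU
    obtain ⟨_, hs⟩ := hU.nonempty
    obtain ⟨y, hy⟩ := exists_reflTransGen_step_coverReduction_none_of_unbounded hU
    obtain ⟨z, hz⟩ := exists_reflTransGen_step_of_reflTransGen_coverReduction_none hy _ rfl
    exact ⟨z, reaches_iff.2 ⟨(reaches_iff.1 hs).1, hz⟩⟩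

end VASSPaper
end

section
/- Let V=(Q,D,Δ,w) be a 1-VASS with disequality tests and let s,t ∈ Q be states such that t is reachable from every state of Q in the underlying directed graph (Q,Δ). If (s,0) is unbounded in V, then (s,0) covers t. -/
namespace VASSPaper

variable {Q : Type}

/-! Pigeonhole on the finitely many states gives a state `q` reached from `(s, 0)` with
arbitrarily large counter values. A fixed path from `q` to `t` lowers the counter by a bounded
amount, and above the finitely many values forbidden by the guards every counter value is allowed;
so from a large enough counter value at `q` the path is a valid run reaching `t`. -/

lemma pathWeight_cons (V : OneVASS Q) (a b : Q) (l : List Q) :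
    pathWeight V (a :: b :: l) = V.w a b + pathWeight V (b :: l) := by
  simp [pathWeight]

lemma pathWeight_append (V : OneVASS Q) :
    ∀ {π₁ π₂ : List Q}, π₁ ≠ [] → π₁.getLast? = π₂.head? →
      pathWeight V (π₁ ++ π₂.tail) = pathWeight V π₁ + pathWeight V π₂
  | [], _, h, _ => absurd rfl h
  | [a], π₂, _, hj => by
      cases π₂ with
      | nil => simp at hj
      | cons b l =>
        obtain rfl : a = b := by simpa using hj
        simp [pathWeight]
  | a :: b :: l, π₂, _, hj => by
      have ih := pathWeight_append V (π₁ := b :: l) (π₂ := π₂) (by simp) (by simpa using hj)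
      simp only [List.cons_append] at ih ⊢
      rw [pathWeight_cons, pathWeight_cons, ih, add_assoc]

lemma IsPath.append {V : OneVASS Q} :
    ∀ {π₁ π₂ : List Q}, IsPath V π₁ → IsPath V π₂ → π₁.getLast? = π₂.head? →
      IsPath V (π₁ ++ π₂.tail)
  | [], _, h, _, _ => h.elim
  | [a], π₂, _, h₂, hj => by
      cases π₂ with
      | nil => simp at hj
      | cons b l =>
        obtain rfl : a = b := by simpa using hj
        simpa using h₂
  | a :: b :: l, _, h₁, h₂, hj => ⟨h₁.1, IsPath.append h₁.2 h₂ (by simpa using hj)⟩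

lemma getLast?_append_tail {π₁ π₂ : List Q} (hj : π₁.getLast? = π₂.head?) :
    (π₁ ++ π₂.tail).getLast? = π₂.getLast? := by
  rcases π₂ with _ | ⟨x, _ | ⟨y, l⟩⟩
  · simpa using hj
  · simpa using hj
  · rw [List.tail_cons, List.getLast?_append_of_ne_nil _ (by simp), List.getLast?_cons_cons]

lemma counterAt_append_of_lt (V : OneVASS Q) (z : ℕ) {π₁ : List Q} (τ : List Q) {i : ℕ}
    (h : i < π₁.length) : counterAt V z (π₁ ++ τ) i = counterAt V z π₁ i := by
  rw [counterAt, counterAt, List.take_append, Nat.sub_eq_zero_of_le h, List.take_zero,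
    List.append_nil]

lemma counterAt_append_length_add (V : OneVASS Q) {z z' : ℕ} {π₁ π₂ : List Q} (j : ℕ)
    (hne : π₁ ≠ []) (hj : π₁.getLast? = π₂.head?) (hz' : (z' : ℤ) = z + pathWeight V π₁) :
    counterAt V z (π₁ ++ π₂.tail) (π₁.length + j) = counterAt V z' π₂ (j + 1) := by
  cases π₂ with
  | nil => simp [List.getLast?_eq_none_iff.mp hj] at hne
  | cons x τ =>
    have htake : (π₁ ++ τ).take (π₁.length + j + 1) = π₁ ++ ((x :: τ).take (j + 2)).tail := by
      rw [List.take_append, List.take_of_length_le (by omega)]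
      simp only [List.take_succ_cons, List.tail_cons]
      congr 2
      omega
    rw [counterAt, counterAt, List.tail_cons, htake,
      pathWeight_append V hne (by simpa using hj), hz', add_assoc]

lemma isValidRun_iff {V : OneVASS Q} {π : List Q} {z : ℕ} :
    IsValidRun V π z ↔ IsPath V π ∧ ∀ i (h : i < π.length),
      0 ≤ counterAt V z π i ∧ (counterAt V z π i).toNat ∈ V.D π[i] := by
  simp only [IsValidRun, IsRun, List.get_eq_getElem]
  exact ⟨fun ⟨⟨hp, hn⟩, hg⟩ => ⟨hp, fun i h => ⟨hn i h, hg i h⟩⟩,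
    fun ⟨hp, h⟩ => ⟨⟨hp, fun i hi => (h i hi).1⟩, fun i hi => (h i hi).2⟩⟩

lemma IsValidRun.append {V : OneVASS Q} {π₁ π₂ : List Q} {z z' : ℕ}
    (h₁ : IsValidRun V π₁ z) (h₂ : IsValidRun V π₂ z') (hne : π₁ ≠ [])
    (hj : π₁.getLast? = π₂.head?) (hz' : (z' : ℤ) = z + pathWeight V π₁) :
    IsValidRun V (π₁ ++ π₂.tail) z := by
  rw [isValidRun_iff] at h₁ h₂ ⊢
  refine ⟨h₁.1.append h₂.1 hj, fun i hi => ?_⟩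
  by_cases hlt : i < π₁.length
  · rw [counterAt_append_of_lt V z _ hlt, List.getElem_append_left hlt]
    exact h₁.2 i hlt
  · obtain ⟨j, rfl⟩ := Nat.exists_eq_add_of_le (not_lt.mp hlt)
    have hj₂ : j + 1 < π₂.length := by simp at hi; omega
    rw [counterAt_append_length_add V j hne hj hz', List.getElem_append_right (by omega)]
    simpa [List.getElem_tail] using h₂.2 (j + 1) hj₂

lemma Reaches.trans {V : OneVASS Q} {c c' c'' : Q × ℕ}
    (h₁ : Reaches V c c') (h₂ : Reaches V c' c'') : Reaches V c c'' := by
  obtain ⟨π₁, hv₁, hh₁, hl₁, hw₁⟩ := h₁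
  obtain ⟨π₂, hv₂, hh₂, hl₂, hw₂⟩ := h₂
  have hne : π₁ ≠ [] := by rintro rfl; simp at hh₁
  have hj : π₁.getLast? = π₂.head? := by rw [hl₁, hh₂]
  refine ⟨π₁ ++ π₂.tail, hv₁.append hv₂ hne hj hw₁, ?_, ?_, ?_⟩
  · rwa [List.head?_append_of_ne_nil _ hne]
  · rwa [getLast?_append_tail hj]
  · rw [pathWeight_append V hne hj, hw₂, hw₁, add_assoc]

lemma exists_path_of_reflTransGen (V : OneVASS Q) {q t : Q}
    (h : Relation.ReflTransGen V.delta q t) :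
    ∃ ρ : List Q, IsPath V ρ ∧ ρ.head? = some q ∧ ρ.getLast? = some t := by
  induction h using Relation.ReflTransGen.head_induction_on with
  | refl => exact ⟨[t], trivial, rfl, rfl⟩
  | head hab _ ih =>
    obtain ⟨_ | ⟨b, l⟩, hp, hh, hl⟩ := ih
    · simp at hh
    · obtain rfl : b = _ := Option.some.inj hh
      exact ⟨_ :: b :: l, ⟨hab, hp⟩, rfl, by rwa [List.getLast?_cons_cons]⟩

lemma exists_forall_le_mem_D [Finite Q] (V : OneVASS Q) :
    ∃ M : ℕ, ∀ q n, M ≤ n → n ∈ V.D q := by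
  obtain ⟨M, hM⟩ := (Set.finite_iUnion V.cofinite).bddAbove
  refine ⟨M + 1, fun q n hn => by_contra fun hnD => ?_⟩
  have := hM (Set.mem_iUnion.mpr ⟨q, hnD⟩)
  omega

lemma exists_neg_le_pathWeight_take (V : OneVASS Q) (ρ : List Q) :
    ∃ A : ℕ, ∀ i, -(A : ℤ) ≤ pathWeight V (ρ.take i) := by
  refine ⟨(Finset.range (ρ.length + 1)).sup fun i => (pathWeight V (ρ.take i)).natAbs,
    fun i => ?_⟩
  have hle := Finset.le_sup (f := fun i => (pathWeight V (ρ.take i)).natAbs)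
    (Finset.mem_range.mpr (Nat.lt_add_one_of_le (min_le_right i ρ.length)))
  rw [← List.take_take, List.take_length] at hle
  omega

lemma IsPath.exists_isValidRun [Finite Q] {V : OneVASS Q} {ρ : List Q} (hρ : IsPath V ρ) :
    ∃ N : ℕ, ∀ z : ℕ, N ≤ z → IsValidRun V ρ z ∧ 0 ≤ (z : ℤ) + pathWeight V ρ := by
  obtain ⟨M, hM⟩ := exists_forall_le_mem_D V
  obtain ⟨A, hA⟩ := exists_neg_le_pathWeight_take V ρ
  refine ⟨M + A, fun z hz => ⟨isValidRun_iff.mpr ⟨hρ, fun i _ => ?_⟩, ?_⟩⟩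
  · have := hA (i + 1)
    have hcount : (M : ℤ) ≤ counterAt V z ρ i := by rw [counterAt]; omega
    exact ⟨by omega, hM _ _ (by omega)⟩
  · have := hA ρ.length
    rw [List.take_length] at this
    omega

lemma exists_forall_le_reaches_of_reflTransGen [Finite Q] (V : OneVASS Q) {q t : Q}
    (h : Relation.ReflTransGen V.delta q t) :
    ∃ N : ℕ, ∀ z : ℕ, N ≤ z → ∃ z', Reaches V (q, z) (t, z') := by
  obtain ⟨ρ, hρ, hh, hl⟩ := exists_path_of_reflTransGen V h
  obtain ⟨N, hN⟩ := hρ.exists_isValidRun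
  refine ⟨N, fun z hz => ?_⟩
  obtain ⟨hv, hpos⟩ := hN z hz
  exact ⟨_, ρ, hv, hh, hl, Int.toNat_of_nonneg hpos⟩

lemma Unbounded.exists_infinite_counters [Finite Q] {V : OneVASS Q} {c : Q × ℕ}
    (h : Unbounded V c) : ∃ q, {z | Reaches V c (q, z)}.Infinite := by
  by_contra! hfin
  refine h ((Set.finite_iUnion fun q => (hfin q).image (Prod.mk q)).subset ?_)
  rintro ⟨q, z⟩ hz
  exact Set.mem_iUnion.mpr ⟨q, z, hz, rfl⟩

/-- if `t` is reachable from every state in the underlying graph and `(s,0)` is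
unbounded, then `(s,0)` covers `t`. -/
theorem covers_of_unbounded_of_all_reach
    {Q : Type} [Fintype Q] (V : OneVASS Q) (s t : Q)
    (hall : ∀ q : Q, Relation.ReflTransGen V.delta q t)
    (hunb : Unbounded V (s, 0)) :
    Covers V s t := by
  obtain ⟨q, hq⟩ := hunb.exists_infinite_counters
  obtain ⟨N, hN⟩ := exists_forall_le_reaches_of_reflTransGen V (hall q)
  obtain ⟨z, hsz, hNz⟩ := hq.exists_gt N
  obtain ⟨z', hzt⟩ := hN z hNz.le
  exact ⟨z', hsz.trans hzt⟩

end VASSPaper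
end
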